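/- arXiv:2304.10834 — 2 statements merged into one kernel-verified Lean document; each statement's English description precedes it below -/
import Mathlib

section
/- Let s : ℝ → ℝ be a nonnegative measurable function on the interval [-1/(2T), 1/(2T)] with T > 0 (the folded spectral SNR). Define SNR_FFE = 1/(T·∫ 1/(s(f)+1) df) − 1 and SNR_DFE = exp(T·∫ log(s(f)+1) df) − 1, where integrals are over [-1/(2T), 1/(2T)]. Then SNR_FFE ≤ SNR_DFE. -/
open MeasureTheory Real

/-! Jensen's inequality for `exp` applied to `-log g` gives `exp (-⨍ log g) ≤ ⨍ g⁻¹`, i.e. the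
harmonic mean of a positive function is at most its geometric mean. Here `g = s + 1` and the
average is over the Nyquist interval, whose length is `1 / T`. -/

theorem inv_average_inv_le_exp_average_log {α : Type*} [MeasurableSpace α] {μ : Measure α}
    [IsFiniteMeasure μ] [NeZero μ] {g : α → ℝ} (hg : ∀ᵐ x ∂μ, 0 < g x)
    (hlog : Integrable (fun x => log (g x)) μ) :
    (⨍ x, (g x)⁻¹ ∂μ)⁻¹ ≤ exp (⨍ x, log (g x) ∂μ) := by
  by_cases hinv : Integrable (fun x => (g x)⁻¹) μ
  · have hexp : (fun x => exp (-log (g x))) =ᵐ[μ] fun x => (g x)⁻¹ :=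
      hg.mono fun x hx => by dsimp only; rw [exp_neg, exp_log hx]
    have jensen : exp (⨍ x, -log (g x) ∂μ) ≤ ⨍ x, (g x)⁻¹ ∂μ := by
      rw [← average_congr hexp]
      exact convexOn_exp.map_average_le continuous_exp.continuousOn isClosed_univ
        (by simp) hlog.neg (hinv.congr hexp.symm)
    rw [average_neg, exp_neg] at jensen
    exact inv_le_of_inv_le₀ (exp_pos _) jensen
  · -- the average of a non-integrable function is `0`
    rw [average_eq, integral_undef hinv, smul_zero, inv_zero]
    exact (exp_pos _).le

theorem volume_real_Icc_neg_one_div_two_mul {T : ℝ} (hT : 0 < T) :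
    volume.real (Set.Icc (-(1 / (2 * T))) (1 / (2 * T))) = T⁻¹ := by
  rw [Real.volume_real_Icc_of_le (by have := one_div_pos.2 (mul_pos two_pos hT); linarith)]
  field_simp; ring

theorem snr_ffe_le_snr_dfe_general (T : ℝ) (hT : 0 < T) (s : ℝ → ℝ)
    (hnn : ∀ f ∈ Set.Icc (-(1 / (2 * T))) (1 / (2 * T)), 0 ≤ s f)
    (hlog : IntegrableOn (fun f => Real.log (s f + 1))
      (Set.Icc (-(1 / (2 * T))) (1 / (2 * T)))) :
    1 / (T * ∫ f in Set.Icc (-(1 / (2 * T))) (1 / (2 * T)), 1 / (s f + 1)) - 1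
      ≤ Real.exp (T * ∫ f in Set.Icc (-(1 / (2 * T))) (1 / (2 * T)),
          Real.log (s f + 1)) - 1 := by
  set I := Set.Icc (-(1 / (2 * T))) (1 / (2 * T))
  have hvol : volume.real I = T⁻¹ := volume_real_Icc_neg_one_div_two_mul hT
  have : NeZero (volume.restrict I) := ⟨by
    rw [Ne, Measure.restrict_eq_zero, ← measureReal_eq_zero_iff measure_Icc_lt_top.ne, hvol]
    positivity⟩
  have hpos : ∀ᵐ f ∂volume.restrict I, 0 < s f + 1 :=
    (ae_restrict_mem measurableSet_Icc).mono fun f hf => by linarith [hnn f hf]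
  have key := inv_average_inv_le_exp_average_log hpos hlog
  simp only [setAverage_eq, hvol, inv_inv, smul_eq_mul, one_div] at key ⊢
  linarith

/-- The infinitely-long FFE output SNR is at most the DFE output SNR
(harmonic mean vs geometric mean of `s+1` over the Nyquist interval). -/
theorem snr_ffe_le_snr_dfe (T : ℝ) (hT : 0 < T) (s : ℝ → ℝ)
    (hmeas : Measurable s)
    (hnn : ∀ f ∈ Set.Icc (-(1 / (2 * T))) (1 / (2 * T)), 0 ≤ s f)
    (hint : IntegrableOn s (Set.Icc (-(1 / (2 * T))) (1 / (2 * T))))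
    (hlog : IntegrableOn (fun f => Real.log (s f + 1))
      (Set.Icc (-(1 / (2 * T))) (1 / (2 * T)))) :
    1 / (T * ∫ f in Set.Icc (-(1 / (2 * T))) (1 / (2 * T)), 1 / (s f + 1)) - 1
      ≤ Real.exp (T * ∫ f in Set.Icc (-(1 / (2 * T))) (1 / (2 * T)),
          Real.log (s f + 1)) - 1 :=
  snr_ffe_le_snr_dfe_general T hT s hnn hlog
end

section
/- If the nonnegative folded SNR s is not almost everywhere constant on [-1/(2T),1/(2T)], then SNR_FFE < SNR_DFE strictly. -/
/-!
Averaged over the Nyquist interval, whose length is `1 / T`, the claim says that the harmonic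
mean of `1 + s` lies strictly below its geometric mean. This is the strict Jensen inequality for
the strictly convex function `exp` at `-log (1 + s)`; it is strict because `s` is not a.e.
constant.
-/

open MeasureTheory Real

section HarmonicGeometricMean

variable {α : Type*} [MeasurableSpace α] {μ : Measure α} {f : α → ℝ}

theorem exp_neg_log_ae_eq_inv (hf : ∀ᵐ x ∂μ, 0 < f x) :
    (fun x => exp (-log (f x))) =ᵐ[μ] fun x => (f x)⁻¹ := by
  filter_upwards [hf] with x hx
  rw [exp_neg, exp_log hx]

theorem integrable_inv_of_one_le_of_integrable_log [IsFiniteMeasure μ] (hf : ∀ᵐ x ∂μ, 1 ≤ f x)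
    (hlog : Integrable (fun x => log (f x)) μ) : Integrable (fun x => (f x)⁻¹) μ := by
  refine Integrable.congr ?_ (exp_neg_log_ae_eq_inv (hf.mono fun _ hx => by linarith))
  refine (integrable_const 1).mono' (continuous_exp.comp_aestronglyMeasurable hlog.1.neg) ?_
  filter_upwards [hf] with x hx
  rw [norm_of_nonneg (exp_pos _).le, exp_le_one_iff, neg_nonpos]
  exact log_nonneg hx

theorem inv_average_inv_lt_exp_average_log [IsFiniteMeasure μ] (hf : ∀ᵐ x ∂μ, 0 < f x)
    (hlog : Integrable (fun x => log (f x)) μ) (hinv : Integrable (fun x => (f x)⁻¹) μ)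
    (hnc : ¬ ∃ c, f =ᵐ[μ] fun _ => c) :
    (⨍ x, (f x)⁻¹ ∂μ)⁻¹ < exp (⨍ x, log (f x) ∂μ) := by
  rcases strictConvexOn_exp.ae_eq_const_or_map_average_lt (f := fun x => -log (f x))
      continuous_exp.continuousOn isClosed_univ (ae_of_all _ fun _ => Set.mem_univ _) hlog.neg
      (hinv.congr (exp_neg_log_ae_eq_inv hf).symm) with hconst | hlt
  · refine absurd ⟨exp (-⨍ x, -log (f x) ∂μ), ?_⟩ hnc
    filter_upwards [hconst, hf] with x hx hfx
    rw [Function.const_apply] at hx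
    rw [← hx, neg_neg, exp_log hfx]
  · rw [average_congr (exp_neg_log_ae_eq_inv hf), average_neg, exp_neg] at hlt
    have hpos : 0 < ⨍ x, (f x)⁻¹ ∂μ := (inv_pos.2 (exp_pos _)).trans hlt
    exact (inv_lt_comm₀ (exp_pos _) hpos).1 hlt

end HarmonicGeometricMean

theorem setAverage_Icc_eq {a b : ℝ} (hab : a ≤ b) (g : ℝ → ℝ) :
    ⨍ x in Set.Icc a b, g x = (b - a)⁻¹ * ∫ x in Set.Icc a b, g x := by
  rw [setAverage_eq, volume_real_Icc_of_le hab, smul_eq_mul]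

theorem snr_ffe_lt_snr_dfe_general (T : ℝ) (hT : 0 < T) (s : ℝ → ℝ)
    (hnn : ∀ f ∈ Set.Icc (-(1 / (2 * T))) (1 / (2 * T)), 0 ≤ s f)
    (hlog : IntegrableOn (fun f => Real.log (s f + 1))
      (Set.Icc (-(1 / (2 * T))) (1 / (2 * T))))
    (hnc : ¬ ∃ c : ℝ, s =ᵐ[volume.restrict (Set.Icc (-(1 / (2 * T))) (1 / (2 * T)))]
      fun _ => c) :
    1 / (T * ∫ f in Set.Icc (-(1 / (2 * T))) (1 / (2 * T)), 1 / (s f + 1)) - 1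
      < Real.exp (T * ∫ f in Set.Icc (-(1 / (2 * T))) (1 / (2 * T)),
          Real.log (s f + 1)) - 1 := by
  set I := Set.Icc (-(1 / (2 * T))) (1 / (2 * T))
  have hT_mul_eq_average (g : ℝ → ℝ) : T * ∫ f in I, g f = ⨍ f in I, g f := by
    have hlen : (1 / (2 * T) - -(1 / (2 * T)))⁻¹ = T := by field_simp; ring
    rw [setAverage_Icc_eq (by simp only [neg_le_self_iff]; positivity), hlen]
  have hone_le : ∀ᵐ f ∂volume.restrict I, 1 ≤ s f + 1 :=
    (ae_restrict_mem measurableSet_Icc).mono fun f hf => by linarith [hnn f hf]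
  have hnc_add_one : ¬ ∃ c : ℝ, (fun f => s f + 1) =ᵐ[volume.restrict I] fun _ => c := by
    rintro ⟨c, hc⟩
    exact hnc ⟨c - 1, hc.mono fun f hf => by simp only at hf; linarith⟩
  simp only [hT_mul_eq_average, one_div]
  linarith [inv_average_inv_lt_exp_average_log (hone_le.mono fun _ hf => by linarith) hlog
    (integrable_inv_of_one_le_of_integrable_log hone_le hlog) hnc_add_one]

/-- If the nonnegative folded SNR `s` is not almost everywhere constant on the
Nyquist interval, then `SNR_FFE < SNR_DFE` strictly. -/
theorem snr_ffe_lt_snr_dfe (T : ℝ) (hT : 0 < T) (s : ℝ → ℝ)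
    (hmeas : Measurable s)
    (hnn : ∀ f ∈ Set.Icc (-(1 / (2 * T))) (1 / (2 * T)), 0 ≤ s f)
    (hint : IntegrableOn s (Set.Icc (-(1 / (2 * T))) (1 / (2 * T))))
    (hlog : IntegrableOn (fun f => Real.log (s f + 1))
      (Set.Icc (-(1 / (2 * T))) (1 / (2 * T))))
    (hnc : ¬ ∃ c : ℝ, s =ᵐ[volume.restrict (Set.Icc (-(1 / (2 * T))) (1 / (2 * T)))]
      fun _ => c) :
    1 / (T * ∫ f in Set.Icc (-(1 / (2 * T))) (1 / (2 * T)), 1 / (s f + 1)) - 1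
      < Real.exp (T * ∫ f in Set.Icc (-(1 / (2 * T))) (1 / (2 * T)),
          Real.log (s f + 1)) - 1 :=
  snr_ffe_lt_snr_dfe_general T hT s hnn hlog hnc
end
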